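/- For every probabilistic labeled transition system L, every ε-unwinding family R^· for L, every ε' ∈ [0,ε], all x₁, x₂ ∈ S_⊥ with x₁ R^{ε'} x₂, every i⃗ ∈ I*, and every e⃗ ∈ E*: Pr[⟦⟨L,x₁⟩⟧(i⃗)↾E ⊒ e⃗] ≤ e^{ε'} · Pr[⟦⟨L,x₂⟩⟧(i⃗)↾E ⊒ e⃗] and Pr[⟦⟨L,x₂⟩⟧(i⃗)↾E ⊒ e⃗] ≤ e^{ε'} · Pr[⟦⟨L,x₁⟩⟧(i⃗)↾E ⊒ e⃗]. -/

import Mathlib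

open scoped Classical

/-- Restriction of a sequence of actions to a subset `E` of actions. -/
noncomputable def restrictList {A : Type*} (E : Set A) : List A → List A
  | [] => []
  | a :: l => if a ∈ E then a :: restrictList E l else restrictList E l

/-- `gammaSet E evec` is the set of action sequences whose restriction to `E` is `evec`
and whose last element is the last element of `evec` (with `gammaSet E [] = {[]}`). -/
def gammaSet {A : Type*} (E : Set A) (evec : List A) : Set (List A) :=
  {avec | (evec = [] ∧ avec = []) ∨
    (evec ≠ [] ∧ restrictList E avec = evec ∧ avec.getLast? = evec.getLast?)}

/-- A probabilistic labeled transition system (data part): sets of data points,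
queries, responses, and hidden outputs, together with a (deterministic) partial
transition function assigning to a state and an action a discrete distribution
over next states. -/
structure PLTS (S : Type*) (A : Type*) where
  dat : Set A
  qry : Set A
  resp : Set A
  hid : Set A
  trans : S → A → Option (S → ℝ)

namespace PLTS

variable {S : Type*} {A : Type*}

def inp (L : PLTS S A) : Set A := L.dat ∪ L.qry
def out (L : PLTS S A) : Set A := L.resp ∪ L.hid
def obs (L : PLTS S A) : Set A := L.qry ∪ L.resp

/-- Well-formedness of a PLTS: the action sets are pairwise suitably disjoint,
every transition target is a discrete probability distribution, output determinism,
quasi-input enabling, and transitions only occur on actions of the system. -/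
def WF (L : PLTS S A) : Prop :=
  Disjoint L.dat L.qry ∧ Disjoint L.resp L.hid ∧ Disjoint L.inp L.out ∧
  (∀ s a μ, L.trans s a = some μ → (∀ s', 0 ≤ μ s') ∧ (∑' s', μ s') = 1) ∧
  (∀ s a o μ μ', o ∈ L.out → L.trans s o = some μ → L.trans s a = some μ' → a = o) ∧
  (∀ s i₁ i₂ μ₁, i₁ ∈ L.inp → i₂ ∈ L.inp → L.trans s i₁ = some μ₁ → ∃ μ₂, L.trans s i₂ = some μ₂) ∧
  (∀ s a μ, L.trans s a = some μ → a ∈ L.inp ∪ L.out)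

/-- The trace probability `⟨L,s⟩(i⃗)(a⃗,s')`: probability that, with available inputs
`ivec`, the automaton started at `s` produces the action sequence `avec` and is in
state `s'` after the last action.  (First argument is the action sequence.) -/
noncomputable def traceProb (L : PLTS S A) : List A → S → List A → S → ℝ
  | [], s, _, s' => if s' = s then 1 else 0
  | a :: avec, s, ivec, s' =>
    if a ∈ L.inp then
      match ivec with
      | [] => 0
      | i :: ivec' =>
        if i = a then
          match L.trans s a with
          | some μ => ∑' s'' : S, μ s'' * L.traceProb avec s'' ivec' s'
          | none => 0
        else 0
    else
      match L.trans s a with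
      | some μ => ∑' s'' : S, μ s'' * L.traceProb avec s'' ivec s'
      | none => 0

/-- `Pr[⟦⟨L,s⟩⟧(i⃗) ⊒ a⃗]`. -/
noncomputable def prefixProb (L : PLTS S A) (s : S) (ivec avec : List A) : ℝ :=
  ∑' s' : S, L.traceProb avec s ivec s'

/-- `γ(e⃗)` for the observable actions of `L`. -/
def gamma (L : PLTS S A) (evec : List A) : Set (List A) :=
  gammaSet L.obs evec

/-- `Pr[⟦⟨L,s⟩⟧(i⃗)↾E ⊒ e⃗]`. -/
noncomputable def obsProb (L : PLTS S A) (s : S) (ivec evec : List A) : ℝ :=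
  ∑' avec : L.gamma evec, L.prefixProb s ivec avec.1

/-- A state is `H`-disabled if it enables no hidden output. -/
def HDisabled (L : PLTS S A) (s : S) : Prop := ∀ h ∈ L.hid, L.trans s h = none

/-- Sequences of hidden actions. -/
def HSeq (L : PLTS S A) : Set (List A) := {l | ∀ x ∈ l, x ∈ L.hid}

/-- The state part of the extended-transition distribution obtained from `μ`. -/
noncomputable def extDistState (L : PLTS S A) (μ : S → ℝ) (s' : S) : ℝ :=
  if L.HDisabled s' then ∑' s'' : S, μ s'' * ∑' hl : L.HSeq, L.traceProb hl.1 s'' [] s' else 0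

/-- The extended-transition distribution over `S_⊥ = Option S` obtained from `μ`. -/
noncomputable def extDist (L : PLTS S A) (μ : S → ℝ) : Option S → ℝ
  | some s' => L.extDistState μ s'
  | none => 1 - ∑' s' : S, L.extDistState μ s'

/-- The extended transition `s ⇒^a ν`. -/
def ExtTrans (L : PLTS S A) (s : S) (a : A) (ν : Option S → ℝ) : Prop :=
  ∃ μ, L.trans s a = some μ ∧ ν = L.extDist μ

/-- The extended transition from an element of `S_⊥` (⊥ has no transitions). -/
def ExtTransX (L : PLTS S A) (x : Option S) (a : A) (ν : Option S → ℝ) : Prop :=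
  ∃ s, x = some s ∧ L.ExtTrans s a ν

/-- Observable prefix probability from an element of `S_⊥`. -/
noncomputable def obsProbX (L : PLTS S A) (x : Option S) (ivec evec : List A) : ℝ :=
  match x with
  | some s => L.obsProb s ivec evec
  | none => if evec = [] then 1 else 0

end PLTS

/-- The elements of `T` having no strict prefix in `T`. -/
def minimalPrefixes {X : Type*} (T : Set (List X)) : Set (List X) :=
  {e | e ∈ T ∧ ¬ ∃ e' ∈ T, e' <+: e ∧ e' ≠ e}

namespace PLTS

variable {S : Type*} {A : Type*}

/-- `Pr[⟦M⟧(i⃗)↾E ⊒ T]` for a set `T` of observable sequences. -/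
noncomputable def obsSetProb (L : PLTS S A) (s : S) (ivec : List A) (T : Set (List A)) : ℝ :=
  ∑' e : minimalPrefixes T, L.obsProb s ivec e.1

/-- `Δ(i⃗₁,i⃗₂) ≤ 1`: the two input sequences are equal or one is obtained from the
other by the insertion of a single data point. -/
def AdjOne (L : PLTS S A) (i₁ i₂ : List A) : Prop :=
  i₁ = i₂ ∨ ∃ (pre post : List A) (d : A), d ∈ L.dat ∧
    ((i₁ = pre ++ d :: post ∧ i₂ = pre ++ post) ∨ (i₂ = pre ++ d :: post ∧ i₁ = pre ++ post))

/-- `Δ(i⃗₁,i⃗₂) ≤ n`. -/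
def DeltaLe (L : PLTS S A) : ℕ → List A → List A → Prop
  | 0, i₁, i₂ => i₁ = i₂
  | n + 1, i₁, i₂ => i₁ = i₂ ∨ ∃ (pre post₁ post₂ : List A) (d : A), d ∈ L.dat ∧
      (((i₁ = pre ++ d :: post₁ ∧ i₂ = pre ++ post₂) ∨
        (i₂ = pre ++ d :: post₂ ∧ i₁ = pre ++ post₁)) ∧ L.DeltaLe n post₁ post₂)

/-- `ε`-differential noninterference of the automaton `⟨L, s₀⟩`. -/
def DiffNI (L : PLTS S A) (s₀ : S) (ε : ℝ) : Prop :=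
  ∀ i₁ i₂ : List A, (∀ a ∈ i₁, a ∈ L.inp) → (∀ a ∈ i₂, a ∈ L.inp) → L.AdjOne i₁ i₂ →
    ∀ T : Set (List A), (∀ e ∈ T, ∀ a ∈ e, a ∈ L.obs) →
      L.obsSetProb s₀ i₁ T ≤ Real.exp ε * L.obsSetProb s₀ i₂ T

/-- A state is reachable from `s₀` if some trace reaches it with positive probability. -/
def Reachable (L : PLTS S A) (s₀ s : S) : Prop :=
  ∃ ivec avec, 0 < L.traceProb avec s₀ ivec s

/-- `HDisabled` extended to `S_⊥`. -/
def HDisabledX (L : PLTS S A) : Option S → Prop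
  | some s => L.HDisabled s
  | none => True

end PLTS

/-- `δ`-approximate lifting of a relation `R` to distributions. -/
def ApproxLift {X : Type*} (R : X → X → Prop) (δ : ℝ) (ν₁ ν₂ : X → ℝ) : Prop :=
  ∃ β : {x : X // 0 < ν₁ x} → {x : X // 0 < ν₂ x}, Function.Bijective β ∧
    ∀ x : {x : X // 0 < ν₁ x},
      R x.1 (β x).1 ∧ |Real.log (ν₁ x.1) - Real.log (ν₂ (β x).1)| ≤ δ

namespace PLTS

variable {S : Type*} {A : Type*}

/-- An `ε`-unwinding family for `L`: a family of relations over the `H`-disabled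
states of `L` (extended to `S_⊥`), indexed by `[0,ε]`, satisfying the unwinding
conditions. -/
def IsUnwindingFamily (L : PLTS S A) (ε : ℝ) (R : ℝ → Option S → Option S → Prop) : Prop :=
  0 ≤ ε ∧
  (∀ ε', 0 ≤ ε' → ε' ≤ ε → ∀ x₁ x₂, R ε' x₁ x₂ → L.HDisabledX x₁ ∧ L.HDisabledX x₂) ∧
  (∀ ε', 0 ≤ ε' → ε' ≤ ε → ∀ x₁ x₂, R ε' x₁ x₂ → ∀ a, a ∈ L.inp ∪ L.resp →
    (((∃ ν₁, L.ExtTransX x₁ a ν₁) ↔ (∃ ν₂, L.ExtTransX x₂ a ν₂)) ∧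
     (∀ ν₁ ν₂, L.ExtTransX x₁ a ν₁ → L.ExtTransX x₂ a ν₂ →
       ∃ δ, 0 ≤ δ ∧ δ ≤ ε' ∧ ApproxLift (R (ε' - δ)) δ ν₁ ν₂)))

/-- The family `R` covers state `s` and data point `d`. -/
def Covers (L : PLTS S A) (ε : ℝ) (R : ℝ → Option S → Option S → Prop) (s : S) (d : A) : Prop :=
  ∀ ν, L.ExtTrans s d ν → ν none = 0 ∧ ∀ s', 0 < ν (some s') → R ε (some s) (some s')

end PLTS

/-!
All probabilities are recomputed in `ℝ≥0∞`, where sums are unconditional; the real quantities of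
the statement are their `toReal`s (every trace probability is at most `1`), and the two
inequalities together make one side infinite exactly when the other is.

Observing `e :: ev` splits over the first action `a`. After `a` the run moves by `μ` and then
follows hidden steps until it rests in an `H`-disabled state, the mass of divergent hidden runs
going to `⊥`; so the contribution of `a` is the average of the observation probability against the
extended transition `ν`. Related states enable the same actions of `I ∪ R`, and the lifting
`ν₁ L(R^{ε'-δ}, δ) ν₂` compares the two averages term by term along its bijection, losing `e^δ`,
while induction on `|i⃗| + |e⃗|` supplies `e^{ε'-δ}` for the related successors. The reverse
inequality is the same statement for the flipped family, which is again an unwinding family.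
-/

open scoped ENNReal

theorem ENNReal.tsum_option {α : Type*} (f : Option α → ℝ≥0∞) :
    ∑' x, f x = f none + ∑' a, f (some a) := by
  rw [ENNReal.tsum_eq_add_tsum_ite none]
  congr 1
  rw [← (Option.some_injective α).tsum_eq]
  · simp
  · intro x hx
    cases x with
    | none => simp at hx
    | some a => exact ⟨a, rfl⟩

theorem ENNReal.toReal_le_toReal_mul {a b c : ℝ≥0∞} (hc : c ≠ ⊤) (hab : a ≤ c * b)
    (hba : b ≤ c * a) : a.toReal ≤ c.toReal * b.toReal := by
  by_cases hb : b = ⊤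
  · have ha : a = ⊤ := by
      by_contra ha
      exact ENNReal.mul_ne_top hc ha (top_le_iff.1 (hb ▸ hba))
    simp [ha, hb]
  · rw [← ENNReal.toReal_mul]
    exact ENNReal.toReal_mono (ENNReal.mul_ne_top hc hb) hab

theorem ENNReal.tsum_tsum_tsum_mul {α β γ : Type*} (f : α → γ → ℝ≥0∞) (g : β → γ → ℝ≥0∞) :
    ∑' a, ∑' b, ∑' c, f a c * g b c = ∑' c, (∑' a, f a c) * ∑' b, g b c := by
  calc ∑' a, ∑' b, ∑' c, f a c * g b c = ∑' a, ∑' c, f a c * ∑' b, g b c :=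
        tsum_congr fun a => by rw [ENNReal.tsum_comm]; simp only [ENNReal.tsum_mul_left]
    _ = _ := by rw [ENNReal.tsum_comm]; simp only [ENNReal.tsum_mul_right]

theorem ENNReal.tsum_ite_tsum_mul {α β : Type*} (p : β → Prop) [DecidablePred p]
    (c : α → ℝ≥0∞) (f : β → α → ℝ≥0∞) :
    ∑' b, (if p b then ∑' a, c a * f b a else 0) = ∑' a, c a * ∑' b, if p b then f b a else 0 := by
  calc ∑' b, (if p b then ∑' a, c a * f b a else 0)
      = ∑' b, ∑' a, c a * if p b then f b a else 0 := tsum_congr fun b => by split_ifs <;> simp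
    _ = _ := by rw [ENNReal.tsum_comm]; simp only [ENNReal.tsum_mul_left]

section ListSums

variable {α : Type*}

theorem ENNReal.tsum_list_eq_tsum_cons {f : List α → ℝ≥0∞} (hf : f [] = 0) :
    ∑' l, f l = ∑' a, ∑' r, f (a :: r) := by
  have hinj : Function.Injective fun p : α × List α => p.1 :: p.2 := by
    rintro ⟨a, r⟩ ⟨b, t⟩ h
    simp_all
  rw [← hinj.tsum_eq]
  · exact ENNReal.tsum_prod (f := fun a r => f (a :: r))
  intro l hl
  cases l with
  | nil => exact absurd hf hl
  | cons a r => exact ⟨(a, r), rfl⟩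

/-- Every list splits uniquely into a maximal prefix of elements satisfying `P` and the rest. -/
theorem ENNReal.tsum_list_eq_tsum_span (P : α → Prop) [DecidablePred P] (f : List α → ℝ≥0∞) :
    ∑' l, f l = ∑' h, ∑' r,
      if (∀ x ∈ h, P x) ∧ (∀ b ∈ r.head?, ¬ P b) then f (h ++ r) else 0 := by
  set F : List α × List α → ℝ≥0∞ := fun q =>
    if (∀ x ∈ q.1, P x) ∧ (∀ b ∈ q.2.head?, ¬ P b) then f (q.1 ++ q.2) else 0
  have hsplit : ∀ l : List α, (∀ x ∈ l.takeWhile (P ·), P x) ∧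
      ∀ b ∈ (l.dropWhile (P ·)).head?, ¬ P b := by
    refine fun l => ⟨fun x hx => by simpa using List.mem_takeWhile_imp hx, fun b hb => ?_⟩
    have := List.head?_dropWhile_not (P ·) l
    rw [Option.mem_def.1 hb] at this
    simpa using this
  have hinj : Function.Injective fun l : List α => (l.takeWhile (P ·), l.dropWhile (P ·)) :=
    fun l l' h => by
      rw [← List.takeWhile_append_dropWhile (p := (P ·)) (l := l),
        ← List.takeWhile_append_dropWhile (p := (P ·)) (l := l')]
      simp_all
  calc ∑' l, f l = ∑' l : List α, F (l.takeWhile (P ·), l.dropWhile (P ·)) := by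
        refine tsum_congr fun l => ?_
        simp only [F, if_pos (hsplit l), List.takeWhile_append_dropWhile]
    _ = ∑' q, F q := by
        refine hinj.tsum_eq fun q hq => ⟨q.1 ++ q.2, ?_⟩
        obtain ⟨hP, hnP⟩ : (∀ x ∈ q.1, P x) ∧ ∀ b ∈ q.2.head?, ¬ P b := by
          by_contra h
          exact hq (if_neg h)
        have htake : q.2.takeWhile (P ·) = [] ∧ q.2.dropWhile (P ·) = q.2 := by
          cases h₂ : q.2 with
          | nil => simp
          | cons b t =>
            have : ¬ P b := hnP b (by simp [h₂])
            simp [List.takeWhile_cons_of_neg, List.dropWhile_cons_of_neg, this]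
        have hP' : ∀ x ∈ q.1, decide (P x) = true := fun x hx => by simpa using hP x hx
        simp [List.takeWhile_append_of_pos hP', List.dropWhile_append_of_pos hP', htake]
    _ = _ := ENNReal.tsum_prod (f := fun h r => F (h, r))

end ListSums

theorem ApproxLift.symm {X : Type*} {R : X → X → Prop} {δ : ℝ} {ν₁ ν₂ : X → ℝ}
    (h : ApproxLift R δ ν₁ ν₂) : ApproxLift (fun x y => R y x) δ ν₂ ν₁ := by
  obtain ⟨β, hβ, hR⟩ := h
  refine ⟨(Equiv.ofBijective β hβ).symm, (Equiv.ofBijective β hβ).symm.bijective, fun y => ?_⟩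
  have := hR ((Equiv.ofBijective β hβ).symm y)
  rw [Equiv.ofBijective_apply_symm_apply β hβ] at this
  exact ⟨this.1, by rw [abs_sub_comm]; exact this.2⟩

theorem Real.le_exp_mul_of_abs_log_sub_le {x y δ : ℝ} (hx : 0 < x) (hy : 0 < y)
    (h : |Real.log x - Real.log y| ≤ δ) : x ≤ Real.exp δ * y := by
  have := (Real.log_le_iff_le_exp hx).1 (show Real.log x ≤ δ + Real.log y by
    linarith [(abs_le.1 h).2])
  rwa [Real.exp_add, Real.exp_log hy] at this

theorem ApproxLift.tsum_mul_le {X : Type*} {R : X → X → Prop} {δ : ℝ} {ν₁ ν₂ : X → ℝ}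
    (h : ApproxLift R δ ν₁ ν₂) {f g : X → ℝ≥0∞} {c : ℝ≥0∞}
    (hfg : ∀ x y, R x y → f x ≤ c * g y) :
    ∑' x, ENNReal.ofReal (ν₁ x) * f x
      ≤ ENNReal.ofReal (Real.exp δ) * c * ∑' y, ENNReal.ofReal (ν₂ y) * g y := by
  obtain ⟨β, hβ, hR⟩ := h
  have hsupp : Function.support (fun x => ENNReal.ofReal (ν₁ x) * f x) ⊆ {x | 0 < ν₁ x} :=
    fun x hx => by
      by_contra hneg
      simp [ENNReal.ofReal_of_nonpos (not_lt.1 hneg)] at hx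
  calc ∑' x, ENNReal.ofReal (ν₁ x) * f x
      = ∑' p : {x // 0 < ν₁ x}, ENNReal.ofReal (ν₁ p) * f p :=
        (tsum_subtype_eq_of_support_subset hsupp).symm
    _ ≤ ∑' p : {x // 0 < ν₁ x},
          ENNReal.ofReal (Real.exp δ) * c * (ENNReal.ofReal (ν₂ (β p)) * g (β p)) := by
        refine ENNReal.tsum_le_tsum fun p => ?_
        have hν : ENNReal.ofReal (ν₁ p)
            ≤ ENNReal.ofReal (Real.exp δ) * ENNReal.ofReal (ν₂ (β p)) := by
          rw [← ENNReal.ofReal_mul (Real.exp_nonneg δ)]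
          exact ENNReal.ofReal_le_ofReal (Real.le_exp_mul_of_abs_log_sub_le p.2 (β p).2 (hR p).2)
        calc ENNReal.ofReal (ν₁ p) * f p
            ≤ (ENNReal.ofReal (Real.exp δ) * ENNReal.ofReal (ν₂ (β p))) * (c * g (β p)) :=
              mul_le_mul' hν (hfg _ _ (hR p).1)
          _ = _ := by ring
    _ = ENNReal.ofReal (Real.exp δ) * c * ∑' q : {y // 0 < ν₂ y}, ENNReal.ofReal (ν₂ q) * g q := by
        rw [ENNReal.tsum_mul_left]
        exact congrArg _ ((Equiv.ofBijective β hβ).tsum_eq fun q => ENNReal.ofReal (ν₂ q) * g q)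
    _ ≤ _ := by
        gcongr
        exact ENNReal.tsum_comp_le_tsum_of_injective Subtype.val_injective _

section Gamma

variable {A : Type*} {E : Set A}

theorem mem_restrictList {a : A} {l : List A} : a ∈ restrictList E l ↔ a ∈ l ∧ a ∈ E := by
  induction l with
  | nil => simp [restrictList]
  | cons b l ih =>
    by_cases hb : b ∈ E
    · simp only [restrictList, if_pos hb, List.mem_cons, ih]
      constructor
      · rintro (rfl | h) <;> tauto
      · rintro ⟨rfl | h, h'⟩ <;> tauto
    · simp only [restrictList, if_neg hb, ih, List.mem_cons]
      constructor
      · tauto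
      · rintro ⟨rfl | h, h'⟩ <;> tauto

theorem mem_gammaSet_nil {l : List A} : l ∈ gammaSet E [] ↔ l = [] := by
  simp [gammaSet]

theorem nil_notMem_gammaSet_cons {e : A} {ev : List A} : [] ∉ gammaSet E (e :: ev) := by
  simp [gammaSet, restrictList]

theorem cons_mem_gammaSet_cons_of_notMem {a e : A} {r ev : List A} (ha : a ∉ E) :
    a :: r ∈ gammaSet E (e :: ev) ↔ r ∈ gammaSet E (e :: ev) := by
  cases r with
  | nil => simp [gammaSet, restrictList, ha]
  | cons b t => simp [gammaSet, restrictList, ha, List.getLast?_cons_cons]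

theorem cons_mem_gammaSet_cons_of_mem {a e : A} {r ev : List A} (ha : a ∈ E) :
    a :: r ∈ gammaSet E (e :: ev) ↔ a = e ∧ r ∈ gammaSet E ev := by
  cases ev with
  | nil =>
    rw [mem_gammaSet_nil]
    constructor
    · rintro (⟨h, -⟩ | ⟨-, hr, hlast⟩)
      · exact absurd h (List.cons_ne_nil _ _)
      rw [restrictList, if_pos ha, List.cons.injEq] at hr
      refine ⟨hr.1, ?_⟩
      by_contra hne
      obtain ⟨b, t, rfl⟩ := List.exists_cons_of_ne_nil hne
      rw [List.getLast?_cons_cons, List.getLast?_singleton, ← hr.1] at hlast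
      have hmem : a ∈ restrictList E (b :: t) :=
        mem_restrictList.2 ⟨List.mem_of_getLast? hlast, ha⟩
      simp [hr.2] at hmem
    · rintro ⟨rfl, rfl⟩
      exact Or.inr ⟨List.cons_ne_nil _ _, by simp [restrictList, ha], rfl⟩
  | cons e' ev =>
    cases r with
    | nil => simp [gammaSet, restrictList, ha]
    | cons b t => simp [gammaSet, restrictList, ha, List.getLast?_cons_cons, and_assoc]

theorem append_mem_gammaSet_cons {h r ev : List A} {e : A} (hh : ∀ x ∈ h, x ∉ E) :
    h ++ r ∈ gammaSet E (e :: ev) ↔ r ∈ gammaSet E (e :: ev) := by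
  induction h with
  | nil => rfl
  | cons a h ih =>
    rw [List.cons_append, cons_mem_gammaSet_cons_of_notMem (hh a List.mem_cons_self)]
    exact ih fun x hx => hh x (List.mem_cons_of_mem _ hx)

theorem tsum_ite_cons_mem_gammaSet_cons (a e : A) (ev : List A) (f : List A → ℝ≥0∞) :
    ∑' r, (if a :: r ∈ gammaSet E (e :: ev) then f r else 0)
      = if a ∈ E then (if a = e then ∑' r, (if r ∈ gammaSet E ev then f r else 0) else 0)
        else ∑' r, (if r ∈ gammaSet E (e :: ev) then f r else 0) := by
  by_cases ha : a ∈ E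
  · simp only [cons_mem_gammaSet_cons_of_mem ha, if_pos ha]
    split_ifs with hae <;> simp [hae]
  · simp only [cons_mem_gammaSet_cons_of_notMem ha, if_neg ha]

end Gamma

namespace PLTS

variable {S A : Type*} (L : PLTS S A)

section WF

variable {L}

theorem WF.nonneg (hWF : L.WF) {s : S} {a : A} {μ : S → ℝ} (hμ : L.trans s a = some μ)
    (u : S) : 0 ≤ μ u :=
  (hWF.2.2.2.1 s a μ hμ).1 u

theorem WF.tsum_ofReal_eq_one (hWF : L.WF) {s : S} {a : A} {μ : S → ℝ}
    (hμ : L.trans s a = some μ) : ∑' u, ENNReal.ofReal (μ u) = 1 := by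
  have hsum := (hWF.2.2.2.1 s a μ hμ).2
  have hsummable : Summable μ := by
    by_contra h
    simp [tsum_eq_zero_of_not_summable h] at hsum
  rw [← ENNReal.ofReal_tsum_of_nonneg (hWF.nonneg hμ) hsummable, hsum, ENNReal.ofReal_one]

theorem WF.notMem_inp_of_mem_hid (hWF : L.WF) {h : A} (hh : h ∈ L.hid) : h ∉ L.inp :=
  fun hi => Set.disjoint_left.1 hWF.2.2.1 hi (Or.inr hh)

theorem WF.notMem_obs_of_mem_hid (hWF : L.WF) {h : A} (hh : h ∈ L.hid) : h ∉ L.obs := by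
  rintro (hq | hr)
  · exact hWF.notMem_inp_of_mem_hid hh (Or.inr hq)
  · exact Set.disjoint_left.1 hWF.2.1 hr hh

theorem WF.trans_eq_none_of_ne_hid (hWF : L.WF) {s : S} {h b : A} {μ : S → ℝ}
    (hh : h ∈ L.hid) (hμ : L.trans s h = some μ) (hb : b ≠ h) : L.trans s b = none := by
  cases hb' : L.trans s b with
  | none => rfl
  | some μ' => exact absurd (hWF.2.2.2.2.1 s b h μ μ' (Or.inr hh) hμ hb') hb

theorem WF.trans_eq_none_of_hDisabled (hWF : L.WF) {s : S} (hs : L.HDisabled s) {a : A}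
    (ha : a ∉ L.inp ∪ L.resp) : L.trans s a = none := by
  cases h : L.trans s a with
  | none => rfl
  | some μ =>
    rcases hWF.2.2.2.2.2.2 s a μ h with hi | hr | hh
    · exact absurd (Or.inl hi) ha
    · exact absurd (Or.inr hr) ha
    · rw [hs a hh] at h
      cases h

end WF

/-- The inputs left after performing `a` with inputs `iv`; `none` if `a` is an input that is
not the next one available. -/
noncomputable def inputsAfter (a : A) (iv : List A) : Option (List A) :=
  if a ∈ L.inp then (if iv.head? = some a then some iv.tail else none) else some iv

theorem inputsAfter_eq_some_iff {a : A} {iv iv' : List A} :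
    L.inputsAfter a iv = some iv' ↔ (a ∈ L.inp ∧ iv = a :: iv') ∨ (a ∉ L.inp ∧ iv' = iv) := by
  unfold inputsAfter
  split_ifs with ha hiv
  · obtain ⟨t, rfl⟩ : ∃ t, iv = a :: t := by
      cases iv with
      | nil => cases hiv
      | cons b t => cases hiv; exact ⟨t, rfl⟩
    simp [ha, eq_comm]
  · simp only [false_iff, not_or, not_and]
    exact ⟨fun _ h => hiv (by simp [h]), fun h => absurd ha h⟩
  · simp [ha, eq_comm]

theorem inputsAfter_of_notMem {a : A} (ha : a ∉ L.inp) (iv : List A) :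
    L.inputsAfter a iv = some iv := by
  simp [inputsAfter, ha]

noncomputable def traceProbE : List A → S → List A → S → ℝ≥0∞
  | [], s, _, s' => if s' = s then 1 else 0
  | a :: avec, s, ivec, s' =>
    if a ∈ L.inp then
      match ivec with
      | [] => 0
      | i :: ivec' =>
        if i = a then
          match L.trans s a with
          | some μ => ∑' s'' : S, ENNReal.ofReal (μ s'') * traceProbE avec s'' ivec' s'
          | none => 0
        else 0
    else
      match L.trans s a with
      | some μ => ∑' s'' : S, ENNReal.ofReal (μ s'') * traceProbE avec s'' ivec s'
      | none => 0

theorem traceProbE_cons_of_trans {a : A} {l : List A} {s : S} {μ : S → ℝ} {iv iv' : List A}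
    (hμ : L.trans s a = some μ) (hiv : L.inputsAfter a iv = some iv') (s' : S) :
    L.traceProbE (a :: l) s iv s' = ∑' u, ENNReal.ofReal (μ u) * L.traceProbE l u iv' s' := by
  rcases (L.inputsAfter_eq_some_iff).1 hiv with ⟨ha, rfl⟩ | ⟨ha, rfl⟩ <;>
    simp [traceProbE, ha, hμ]

theorem traceProbE_cons_eq_zero {a : A} {l : List A} {s : S} {iv : List A}
    (h : L.trans s a = none ∨ L.inputsAfter a iv = none) (s' : S) :
    L.traceProbE (a :: l) s iv s' = 0 := by
  unfold traceProbE inputsAfter at *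
  split_ifs at h ⊢ with ha hia <;> (try cases iv) <;> simp_all

noncomputable def prefixProbE (s : S) (iv l : List A) : ℝ≥0∞ :=
  ∑' s', L.traceProbE l s iv s'

theorem prefixProbE_nil (s : S) (iv : List A) : L.prefixProbE s iv [] = 1 := by
  simp [prefixProbE, traceProbE]

theorem prefixProbE_cons_of_trans {a : A} {l : List A} {s : S} {μ : S → ℝ} {iv iv' : List A}
    (hμ : L.trans s a = some μ) (hiv : L.inputsAfter a iv = some iv') :
    L.prefixProbE s iv (a :: l) = ∑' u, ENNReal.ofReal (μ u) * L.prefixProbE u iv' l := by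
  simp only [prefixProbE, L.traceProbE_cons_of_trans hμ hiv]
  rw [ENNReal.tsum_comm]
  simp only [ENNReal.tsum_mul_left]

theorem prefixProbE_cons_eq_zero {a : A} {l : List A} {s : S} {iv : List A}
    (h : L.trans s a = none ∨ L.inputsAfter a iv = none) : L.prefixProbE s iv (a :: l) = 0 := by
  simp [prefixProbE, L.traceProbE_cons_eq_zero h]

variable {L}

theorem WF.prefixProbE_le_one (hWF : L.WF) (s : S) (iv l : List A) :
    L.prefixProbE s iv l ≤ 1 := by
  induction l generalizing s iv with
  | nil => rw [prefixProbE_nil]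
  | cons a l ih =>
    cases hμ : L.trans s a with
    | none => rw [L.prefixProbE_cons_eq_zero (Or.inl hμ)]; exact zero_le_one
    | some μ =>
      cases hiv : L.inputsAfter a iv with
      | none => rw [L.prefixProbE_cons_eq_zero (Or.inr hiv)]; exact zero_le_one
      | some iv' =>
        rw [L.prefixProbE_cons_of_trans hμ hiv]
        calc ∑' u, ENNReal.ofReal (μ u) * L.prefixProbE u iv' l
            ≤ ∑' u, ENNReal.ofReal (μ u) * 1 :=
              ENNReal.tsum_le_tsum fun u => mul_le_mul_right (ih u iv') _
          _ = 1 := by simpa using hWF.tsum_ofReal_eq_one hμ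

theorem WF.traceProbE_ne_top (hWF : L.WF) (l : List A) (s : S) (iv : List A) (s' : S) :
    L.traceProbE l s iv s' ≠ ⊤ :=
  ne_top_of_le_ne_top ENNReal.one_ne_top
    ((ENNReal.le_tsum s').trans (hWF.prefixProbE_le_one s iv l))

theorem WF.traceProb_eq_toReal (hWF : L.WF) (l : List A) (s : S) (iv : List A) (s' : S) :
    L.traceProb l s iv s' = (L.traceProbE l s iv s').toReal := by
  induction l generalizing s iv with
  | nil => simp only [traceProb, traceProbE]; split_ifs <;> simp
  | cons a l ih =>
    have step : ∀ μ iv', L.trans s a = some μ → ∑' u, μ u * L.traceProb l u iv' s'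
        = (∑' u, ENNReal.ofReal (μ u) * L.traceProbE l u iv' s').toReal := by
      intro μ iv' hμ
      rw [ENNReal.tsum_toReal_eq fun u =>
        ENNReal.mul_ne_top ENNReal.ofReal_ne_top (hWF.traceProbE_ne_top _ _ _ _)]
      simp [ENNReal.toReal_ofReal (hWF.nonneg hμ _), ih]
    cases hμ : L.trans s a <;> cases iv <;> simp [traceProb, traceProbE, hμ] <;>
      split_ifs <;> simp [step _ _ hμ]

theorem WF.prefixProb_eq_toReal (hWF : L.WF) (s : S) (iv l : List A) :
    L.prefixProb s iv l = (L.prefixProbE s iv l).toReal := by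
  rw [prefixProb, prefixProbE, ENNReal.tsum_toReal_eq fun s' => hWF.traceProbE_ne_top _ _ _ _]
  exact tsum_congr fun s' => hWF.traceProb_eq_toReal _ _ _ _

variable (L)

noncomputable def obsProbE (s : S) (iv ev : List A) : ℝ≥0∞ :=
  ∑' l, if l ∈ gammaSet L.obs ev then L.prefixProbE s iv l else 0

noncomputable def obsProbXE : Option S → List A → List A → ℝ≥0∞
  | some s, iv, ev => L.obsProbE s iv ev
  | none, _, ev => if ev = [] then 1 else 0

theorem obsProbE_nil (s : S) (iv : List A) : L.obsProbE s iv [] = 1 := by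
  simp [obsProbE, mem_gammaSet_nil, prefixProbE_nil]

theorem obsProbXE_nil (x : Option S) (iv : List A) : L.obsProbXE x iv [] = 1 := by
  cases x <;> simp [obsProbXE, obsProbE_nil]

variable {L}

theorem WF.obsProbX_eq_toReal (hWF : L.WF) (x : Option S) (iv ev : List A) :
    L.obsProbX x iv ev = (L.obsProbXE x iv ev).toReal := by
  cases x with
  | none => by_cases h : ev = [] <;> simp [obsProbX, obsProbXE, h]
  | some s =>
    have hsub : L.obsProbE s iv ev = ∑' l : L.gamma ev, L.prefixProbE s iv l := by
      rw [tsum_subtype]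
      rfl
    rw [obsProbX, obsProbXE, obsProb, hsub, ENNReal.tsum_toReal_eq fun l =>
      ne_top_of_le_ne_top ENNReal.one_ne_top (hWF.prefixProbE_le_one _ _ _)]
    exact tsum_congr fun l => hWF.prefixProb_eq_toReal _ _ _

variable (L)

theorem traceProbE_append {l₁ : List A} (hl₁ : ∀ x ∈ l₁, x ∉ L.inp) (l₂ : List A) (s : S)
    (iv : List A) (s' : S) :
    L.traceProbE (l₁ ++ l₂) s iv s' = ∑' t, L.traceProbE l₁ s [] t * L.traceProbE l₂ t iv s' := by
  induction l₁ generalizing s with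
  | nil => simp [traceProbE]
  | cons a l₁ ih =>
    have ha : a ∉ L.inp := hl₁ a List.mem_cons_self
    cases hμ : L.trans s a with
    | none => simp [L.traceProbE_cons_eq_zero (Or.inl hμ)]
    | some μ =>
      simp only [List.cons_append, L.traceProbE_cons_of_trans hμ (L.inputsAfter_of_notMem ha _),
        ih (fun x hx => hl₁ x (List.mem_cons_of_mem _ hx)), ← ENNReal.tsum_mul_left,
        ← ENNReal.tsum_mul_right, mul_assoc]
      exact ENNReal.tsum_comm

theorem prefixProbE_append {l₁ : List A} (hl₁ : ∀ x ∈ l₁, x ∉ L.inp) (l₂ : List A) (s : S)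
    (iv : List A) :
    L.prefixProbE s iv (l₁ ++ l₂) = ∑' t, L.traceProbE l₁ s [] t * L.prefixProbE t iv l₂ := by
  simp only [prefixProbE, L.traceProbE_append hl₁, ← ENNReal.tsum_mul_left]
  exact ENNReal.tsum_comm

/-- The weight with which the hidden steps taken from `s` come to rest in the `H`-disabled
state `t`. -/
noncomputable def hiddenClosure (s t : S) : ℝ≥0∞ :=
  if L.HDisabled t then ∑' h, if h ∈ L.HSeq then L.traceProbE h s [] t else 0 else 0

noncomputable def hiddenReach (n : ℕ) (s t : S) : ℝ≥0∞ :=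
  ∑' h, if h ∈ L.HSeq ∧ h.length = n then L.traceProbE h s [] t else 0

noncomputable def hiddenExit (n : ℕ) (s : S) : ℝ≥0∞ :=
  ∑' t, if L.HDisabled t then L.hiddenReach n s t else 0

theorem hiddenReach_zero (s t : S) : L.hiddenReach 0 s t = if t = s then 1 else 0 := by
  rw [hiddenReach, tsum_eq_single []]
  · simp [HSeq, traceProbE]
  · intro h hne
    simp [List.length_eq_zero_iff, hne]

theorem hiddenReach_succ_of_hDisabled {s : S} (hs : L.HDisabled s) (n : ℕ) (t : S) :
    L.hiddenReach (n + 1) s t = 0 := by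
  refine ENNReal.tsum_eq_zero.2 fun h => ?_
  cases h with
  | nil => simp
  | cons b r =>
    by_cases hb : b ∈ L.hid
    · simp [L.traceProbE_cons_eq_zero (Or.inl (hs b hb))]
    · simp [HSeq, hb]

variable {L}

theorem WF.hiddenReach_succ_of_trans (hWF : L.WF) {s : S} {h : A} {μ : S → ℝ}
    (hh : h ∈ L.hid) (hμ : L.trans s h = some μ) (n : ℕ) (t : S) :
    L.hiddenReach (n + 1) s t = ∑' u, ENNReal.ofReal (μ u) * L.hiddenReach n u t := by
  rw [hiddenReach, ENNReal.tsum_list_eq_tsum_cons (by simp), tsum_eq_single h]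
  · have hcons : ∀ r : List A, h :: r ∈ L.HSeq ↔ r ∈ L.HSeq := by simp [HSeq, hh]
    simp only [hcons, List.length_cons, Nat.add_right_cancel_iff,
      L.traceProbE_cons_of_trans hμ (L.inputsAfter_of_notMem (hWF.notMem_inp_of_mem_hid hh) _)]
    exact ENNReal.tsum_ite_tsum_mul _ _ _
  · intro b hb
    refine ENNReal.tsum_eq_zero.2 fun r => ?_
    simp [L.traceProbE_cons_eq_zero (Or.inl (hWF.trans_eq_none_of_ne_hid hh hμ hb))]

theorem exists_trans_hid_of_not_hDisabled {s : S} (hs : ¬ L.HDisabled s) :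
    ∃ h ∈ L.hid, ∃ μ, L.trans s h = some μ := by
  simp only [HDisabled, not_forall] at hs
  obtain ⟨h, hh, hne⟩ := hs
  exact ⟨h, hh, Option.ne_none_iff_exists'.1 hne⟩

theorem WF.sum_range_hiddenExit_le_one (hWF : L.WF) (N : ℕ) (s : S) :
    ∑ n ∈ Finset.range N, L.hiddenExit n s ≤ 1 := by
  induction N generalizing s with
  | zero => simp
  | succ N ih =>
    rw [Finset.sum_range_succ']
    by_cases hs : L.HDisabled s
    · have hexit : ∀ n, L.hiddenExit (n + 1) s = 0 := by
        simp [hiddenExit, L.hiddenReach_succ_of_hDisabled hs]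
      rw [Finset.sum_eq_zero fun n _ => hexit n, zero_add, hiddenExit,
        tsum_eq_single s fun t ht => by simp [hiddenReach_zero, ht]]
      simp [hiddenReach_zero, hs]
    obtain ⟨h, hh, μ, hμ⟩ := exists_trans_hid_of_not_hDisabled hs
    have hexit : ∀ n, L.hiddenExit (n + 1) s = ∑' u, ENNReal.ofReal (μ u) * L.hiddenExit n u := by
      intro n
      simp only [hiddenExit, hWF.hiddenReach_succ_of_trans hh hμ]
      exact ENNReal.tsum_ite_tsum_mul _ _ _
    have hexit₀ : L.hiddenExit 0 s = 0 := by
      refine ENNReal.tsum_eq_zero.2 fun t => ?_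
      rw [hiddenReach_zero]
      split_ifs with ht hts <;> simp_all
    rw [hexit₀, add_zero, Finset.sum_congr rfl fun n _ => hexit n,
      ← Summable.tsum_finsetSum fun _ _ => ENNReal.summable]
    calc ∑' u, ∑ n ∈ Finset.range N, ENNReal.ofReal (μ u) * L.hiddenExit n u
        = ∑' u, ENNReal.ofReal (μ u) * ∑ n ∈ Finset.range N, L.hiddenExit n u := by
          simp only [Finset.mul_sum]
      _ ≤ ∑' u, ENNReal.ofReal (μ u) * 1 :=
          ENNReal.tsum_le_tsum fun u => mul_le_mul_right (ih u) _
      _ = 1 := by simpa using hWF.tsum_ofReal_eq_one hμ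

/-- Stratify by the number of hidden steps: the runs that stop within `N` steps carry mass at most
`1`, by induction on `N` through the unique hidden step of an `H`-enabled state. -/
theorem WF.tsum_hiddenClosure_le_one (hWF : L.WF) (s : S) : ∑' t, L.hiddenClosure s t ≤ 1 := by
  have hsplit : ∑' t, L.hiddenClosure s t = ∑' n, L.hiddenExit n s := by
    simp only [hiddenExit, hiddenReach, hiddenClosure]
    rw [ENNReal.tsum_comm]
    refine tsum_congr fun t => ?_
    split_ifs
    · rw [ENNReal.tsum_comm]
      refine tsum_congr fun h => ?_
      by_cases hh : h ∈ L.HSeq <;> simp [hh]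
    · simp
  rw [hsplit, ENNReal.tsum_eq_iSup_nat]
  exact iSup_le fun N => hWF.sum_range_hiddenExit_le_one N s

theorem WF.tsum_ite_head_notMem_hid (hWF : L.WF) (t : S) (iv : List A) (e : A) (ev : List A) :
    ∑' r, (if (∀ b ∈ r.head?, b ∉ L.hid) ∧ r ∈ gammaSet L.obs (e :: ev)
      then L.prefixProbE t iv r else 0)
      = if L.HDisabled t then L.obsProbE t iv (e :: ev) else 0 := by
  split_ifs with ht
  · refine tsum_congr fun r => ?_
    cases r with
    | nil => simp [nil_notMem_gammaSet_cons]
    | cons b r =>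
      by_cases hb : b ∈ L.hid
      · simp [hb, L.prefixProbE_cons_eq_zero (Or.inl (ht b hb))]
      · simp [hb]
  · obtain ⟨h, hh, μ, hμ⟩ := exists_trans_hid_of_not_hDisabled ht
    refine ENNReal.tsum_eq_zero.2 fun r => ?_
    cases r with
    | nil => simp [nil_notMem_gammaSet_cons]
    | cons b r =>
      by_cases hb : b ∈ L.hid
      · simp [hb]
      · have hbh : b ≠ h := fun hbh => hb (hbh ▸ hh)
        simp [L.prefixProbE_cons_eq_zero (Or.inl (hWF.trans_eq_none_of_ne_hid hh hμ hbh))]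

/-- Before the first observable action, the run first follows hidden steps until it rests in an
`H`-disabled state. -/
theorem WF.obsProbE_cons_eq_tsum_hiddenClosure (hWF : L.WF) (s : S) (iv : List A) (e : A)
    (ev : List A) :
    L.obsProbE s iv (e :: ev) = ∑' t, L.hiddenClosure s t * L.obsProbE t iv (e :: ev) := by
  have hnotinp : ∀ h ∈ L.HSeq, ∀ x ∈ h, x ∉ L.inp := fun h hh x hx =>
    hWF.notMem_inp_of_mem_hid (hh x hx)
  have hnotobs : ∀ h ∈ L.HSeq, ∀ x ∈ h, x ∉ L.obs := fun h hh x hx =>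
    hWF.notMem_obs_of_mem_hid (hh x hx)
  calc L.obsProbE s iv (e :: ev)
      = ∑' h, ∑' r, if (∀ x ∈ h, x ∈ L.hid) ∧ (∀ b ∈ r.head?, b ∉ L.hid) then
          (if h ++ r ∈ gammaSet L.obs (e :: ev) then L.prefixProbE s iv (h ++ r) else 0)
          else 0 := ENNReal.tsum_list_eq_tsum_span (· ∈ L.hid) _
    _ = ∑' h, ∑' r, ∑' t, (if h ∈ L.HSeq then L.traceProbE h s [] t else 0) *
          (if (∀ b ∈ r.head?, b ∉ L.hid) ∧ r ∈ gammaSet L.obs (e :: ev)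
            then L.prefixProbE t iv r else 0) := by
        refine tsum_congr fun h => tsum_congr fun r => ?_
        by_cases hh : h ∈ L.HSeq
        swap
        · rw [if_neg fun hc => hh hc.1]
          simp [hh]
        by_cases hr : ∀ b ∈ r.head?, b ∉ L.hid
        · rw [if_pos ⟨hh, hr⟩, append_mem_gammaSet_cons (hnotobs h hh),
            L.prefixProbE_append (hnotinp h hh)]
          simp only [if_pos hh]
          by_cases hγ : r ∈ gammaSet L.obs (e :: ev)
          · simp only [if_pos hγ, if_pos (And.intro hr hγ)]
          · simp [hγ]
        · rw [if_neg fun hc => hr hc.2]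
          simp only [if_neg fun hc : _ ∧ _ => hr hc.1, mul_zero, tsum_zero]
    _ = ∑' t, L.hiddenClosure s t * L.obsProbE t iv (e :: ev) := by
        rw [ENNReal.tsum_tsum_tsum_mul]
        refine tsum_congr fun t => ?_
        rw [hWF.tsum_ite_head_notMem_hid, hiddenClosure]
        split_ifs <;> simp

variable (L) in
noncomputable def extDistStateE (μ : S → ℝ) (t : S) : ℝ≥0∞ :=
  ∑' u, ENNReal.ofReal (μ u) * L.hiddenClosure u t

theorem WF.tsum_extDistStateE_le_one (hWF : L.WF) {s : S} {a : A} {μ : S → ℝ}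
    (hμ : L.trans s a = some μ) : ∑' t, L.extDistStateE μ t ≤ 1 := by
  calc ∑' t, L.extDistStateE μ t = ∑' u, ENNReal.ofReal (μ u) * ∑' t, L.hiddenClosure u t := by
        simp only [extDistStateE, ← ENNReal.tsum_mul_left]
        exact ENNReal.tsum_comm
    _ ≤ ∑' u, ENNReal.ofReal (μ u) * 1 :=
        ENNReal.tsum_le_tsum fun u => mul_le_mul_right (hWF.tsum_hiddenClosure_le_one u) _
    _ = 1 := by simpa using hWF.tsum_ofReal_eq_one hμ

theorem WF.extDistStateE_ne_top (hWF : L.WF) {s : S} {a : A} {μ : S → ℝ}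
    (hμ : L.trans s a = some μ) (t : S) : L.extDistStateE μ t ≠ ⊤ :=
  ne_top_of_le_ne_top ENNReal.one_ne_top
    ((ENNReal.le_tsum t).trans (hWF.tsum_extDistStateE_le_one hμ))

theorem WF.extDistState_eq_toReal (hWF : L.WF) {s : S} {a : A} {μ : S → ℝ}
    (hμ : L.trans s a = some μ) (t : S) :
    L.extDistState μ t = (L.extDistStateE μ t).toReal := by
  have hclosure_ne_top : ∀ u, L.hiddenClosure u t ≠ ⊤ := fun u =>
    ne_top_of_le_ne_top ENNReal.one_ne_top
      ((ENNReal.le_tsum t).trans (hWF.tsum_hiddenClosure_le_one u))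
  rw [extDistStateE, ENNReal.tsum_toReal_eq fun u =>
    ENNReal.mul_ne_top ENNReal.ofReal_ne_top (hclosure_ne_top u)]
  unfold extDistState
  split_ifs with ht
  · refine tsum_congr fun u => ?_
    have hseq : ∑' h : L.HSeq, L.traceProbE h u [] t
        = ∑' h, if h ∈ L.HSeq then L.traceProbE h u [] t else 0 :=
      tsum_subtype L.HSeq fun h => L.traceProbE h u [] t
    rw [ENNReal.toReal_mul, ENNReal.toReal_ofReal (hWF.nonneg hμ u), hiddenClosure, if_pos ht,
      ← hseq, ENNReal.tsum_toReal_eq fun h => hWF.traceProbE_ne_top _ _ _ _]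
    simp only [hWF.traceProb_eq_toReal]
  · simp [hiddenClosure, ht]

theorem WF.ofReal_extDist_some (hWF : L.WF) {s : S} {a : A} {μ : S → ℝ}
    (hμ : L.trans s a = some μ) (t : S) :
    ENNReal.ofReal (L.extDist μ (some t)) = L.extDistStateE μ t := by
  rw [extDist, hWF.extDistState_eq_toReal hμ, ENNReal.ofReal_toReal (hWF.extDistStateE_ne_top hμ t)]

theorem WF.ofReal_extDist_none (hWF : L.WF) {s : S} {a : A} {μ : S → ℝ}
    (hμ : L.trans s a = some μ) :
    ENNReal.ofReal (L.extDist μ none) = 1 - ∑' t, L.extDistStateE μ t := by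
  have hsum_ne_top : ∑' t, L.extDistStateE μ t ≠ ⊤ :=
    ne_top_of_le_ne_top ENNReal.one_ne_top (hWF.tsum_extDistStateE_le_one hμ)
  rw [extDist, ENNReal.ofReal_sub _ (tsum_nonneg fun t => ?_)]
  · simp only [hWF.extDistState_eq_toReal hμ, ENNReal.ofReal_one,
      ← ENNReal.tsum_toReal_eq (hWF.extDistStateE_ne_top hμ), ENNReal.ofReal_toReal hsum_ne_top]
  · rw [hWF.extDistState_eq_toReal hμ]
    exact ENNReal.toReal_nonneg

/-- Averaging over the successor distribution `μ` is averaging over the extended transition: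
the mass lost to divergent hidden runs sits on `⊥`, which observes only `[]`. -/
theorem WF.tsum_ofReal_mul_obsProbE (hWF : L.WF) {s : S} {a : A} {μ : S → ℝ}
    (hμ : L.trans s a = some μ) (iv ev : List A) :
    ∑' u, ENNReal.ofReal (μ u) * L.obsProbE u iv ev
      = ∑' x, ENNReal.ofReal (L.extDist μ x) * L.obsProbXE x iv ev := by
  rw [ENNReal.tsum_option, hWF.ofReal_extDist_none hμ]
  simp only [hWF.ofReal_extDist_some hμ, obsProbXE]
  cases ev with
  | nil =>
    simp only [obsProbE_nil, mul_one, if_true, hWF.tsum_ofReal_eq_one hμ]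
    exact (tsub_add_cancel_of_le (hWF.tsum_extDistStateE_le_one hμ)).symm
  | cons e ev =>
    simp only [reduceCtorEq, if_false, mul_zero, zero_add, extDistStateE]
    calc ∑' u, ENNReal.ofReal (μ u) * L.obsProbE u iv (e :: ev)
        = ∑' u, ∑' t, ENNReal.ofReal (μ u) * L.hiddenClosure u t * L.obsProbE t iv (e :: ev) :=
          tsum_congr fun u => by
            rw [hWF.obsProbE_cons_eq_tsum_hiddenClosure u, ← ENNReal.tsum_mul_left]
            simp only [mul_assoc]
      _ = _ := by rw [ENNReal.tsum_comm]; simp only [ENNReal.tsum_mul_right]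

variable (L) in
/-- The part of `obsProbXE x iv ev` contributed by runs whose first action is `a`. -/
noncomputable def obsStepXE : Option S → List A → A → List A → ℝ≥0∞
  | none, _, _, _ => 0
  | some s, iv, a, ev =>
    ∑' r, if a :: r ∈ gammaSet L.obs ev then L.prefixProbE s iv (a :: r) else 0

variable (L) in
theorem obsProbXE_cons (x : Option S) (iv : List A) (e : A) (ev : List A) :
    L.obsProbXE x iv (e :: ev) = ∑' a, L.obsStepXE x iv a (e :: ev) := by
  cases x with
  | none => simp [obsProbXE, obsStepXE]
  | some s => exact ENNReal.tsum_list_eq_tsum_cons (by simp [nil_notMem_gammaSet_cons])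

theorem obsStepXE_eq_zero {x : Option S} {a : A} (h : ¬ ∃ ν, L.ExtTransX x a ν)
    (iv ev : List A) : L.obsStepXE x iv a ev = 0 := by
  cases x with
  | none => rfl
  | some s =>
    have hs : L.trans s a = none := by
      cases hμ : L.trans s a with
      | none => rfl
      | some μ => exact absurd ⟨_, s, rfl, μ, hμ, rfl⟩ h
    simp [obsStepXE, L.prefixProbE_cons_eq_zero (Or.inl hs)]

theorem obsStepXE_some_of_inputsAfter_eq_none {s : S} {a : A} {iv : List A}
    (h : L.inputsAfter a iv = none) (ev : List A) : L.obsStepXE (some s) iv a ev = 0 := by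
  simp [obsStepXE, L.prefixProbE_cons_eq_zero (Or.inr h)]

theorem obsStepXE_some_of_trans {s : S} {a : A} {μ : S → ℝ} {iv iv' : List A}
    (hμ : L.trans s a = some μ) (hiv : L.inputsAfter a iv = some iv') (e : A) (ev : List A) :
    L.obsStepXE (some s) iv a (e :: ev) = ∑' u, ENNReal.ofReal (μ u) *
      if a ∈ L.obs then (if a = e then L.obsProbE u iv' ev else 0)
      else L.obsProbE u iv' (e :: ev) := by
  simp only [obsStepXE, L.prefixProbE_cons_of_trans hμ hiv]
  rw [ENNReal.tsum_ite_tsum_mul]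
  exact tsum_congr fun u => by rw [tsum_ite_cons_mem_gammaSet_cons]; rfl

variable (L) in
/-- One direction of the theorem, in `ℝ≥0∞`, at every level `κ ≤ ε` of the family. -/
def ObsProbBound (R : ℝ → Option S → Option S → Prop) (ε : ℝ) (iv ev : List A) : Prop :=
  ∀ κ, 0 ≤ κ → κ ≤ ε → ∀ x₁ x₂, R κ x₁ x₂ →
    L.obsProbXE x₁ iv ev ≤ ENNReal.ofReal (Real.exp κ) * L.obsProbXE x₂ iv ev

theorem WF.tsum_ofReal_mul_obsProbE_le (hWF : L.WF) {R : ℝ → Option S → Option S → Prop}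
    {ε ε' δ : ℝ} {s₁ s₂ : S} {a₁ a₂ : A} {μ₁ μ₂ : S → ℝ} (hμ₁ : L.trans s₁ a₁ = some μ₁)
    (hμ₂ : L.trans s₂ a₂ = some μ₂) (hδ₀ : 0 ≤ δ) (hδ : δ ≤ ε') (hε' : ε' ≤ ε)
    (hν : ApproxLift (R (ε' - δ)) δ (L.extDist μ₁) (L.extDist μ₂)) {iv ev : List A}
    (hbound : L.ObsProbBound R ε iv ev) :
    ∑' u, ENNReal.ofReal (μ₁ u) * L.obsProbE u iv ev
      ≤ ENNReal.ofReal (Real.exp ε') * ∑' u, ENNReal.ofReal (μ₂ u) * L.obsProbE u iv ev := by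
  rw [hWF.tsum_ofReal_mul_obsProbE hμ₁, hWF.tsum_ofReal_mul_obsProbE hμ₂]
  calc _ ≤ ENNReal.ofReal (Real.exp δ) * ENNReal.ofReal (Real.exp (ε' - δ)) * _ :=
        hν.tsum_mul_le fun x y hxy => hbound _ (by linarith) (by linarith) x y hxy
    _ = _ := by rw [← ENNReal.ofReal_mul (Real.exp_nonneg _), ← Real.exp_add, add_sub_cancel]

theorem WF.mem_of_extTransX (hWF : L.WF) {x : Option S} (hx : L.HDisabledX x) {a : A}
    {ν : Option S → ℝ} (h : L.ExtTransX x a ν) : a ∈ L.inp ∪ L.resp := by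
  obtain ⟨s, rfl, μ, hμ, -⟩ := h
  by_contra ha
  rw [hWF.trans_eq_none_of_hDisabled hx ha] at hμ
  cases hμ

theorem IsUnwindingFamily.obsStepXE_le {ε : ℝ} {R : ℝ → Option S → Option S → Prop}
    (hR : L.IsUnwindingFamily ε R) (hWF : L.WF) {ε' : ℝ} (hε'₀ : 0 ≤ ε') (hε' : ε' ≤ ε)
    {x₁ x₂ : Option S} (hx : R ε' x₁ x₂) (a : A) {iv : List A} {e : A} {ev : List A}
    (ih : ∀ iv' X : List A, iv'.length + X.length < iv.length + (e :: ev).length →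
      L.ObsProbBound R ε iv' X) :
    L.obsStepXE x₁ iv a (e :: ev)
      ≤ ENNReal.ofReal (Real.exp ε') * L.obsStepXE x₂ iv a (e :: ev) := by
  by_cases h₁ : ∃ ν, L.ExtTransX x₁ a ν
  swap
  · simp [obsStepXE_eq_zero h₁]
  have ha := hWF.mem_of_extTransX (hR.2.1 ε' hε'₀ hε' x₁ x₂ hx).1 h₁.choose_spec
  obtain ⟨hiff, hlift⟩ := hR.2.2 ε' hε'₀ hε' x₁ x₂ hx a ha
  obtain ⟨ν₂, h₂⟩ := hiff.1 h₁
  obtain ⟨ν₁, h₁⟩ := h₁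
  obtain ⟨δ, hδ₀, hδ, hν⟩ := hlift ν₁ ν₂ h₁ h₂
  obtain ⟨s₁, rfl, μ₁, hμ₁, rfl⟩ := h₁
  obtain ⟨s₂, rfl, μ₂, hμ₂, rfl⟩ := h₂
  have transfer : ∀ iv' X, L.ObsProbBound R ε iv' X →
      ∑' u, ENNReal.ofReal (μ₁ u) * L.obsProbE u iv' X
        ≤ ENNReal.ofReal (Real.exp ε') * ∑' u, ENNReal.ofReal (μ₂ u) * L.obsProbE u iv' X := by
    intro iv' X hX
    rw [hWF.tsum_ofReal_mul_obsProbE hμ₁, hWF.tsum_ofReal_mul_obsProbE hμ₂]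
    calc _ ≤ ENNReal.ofReal (Real.exp δ) * ENNReal.ofReal (Real.exp (ε' - δ)) * _ :=
          hν.tsum_mul_le fun x y hxy => hX _ (by linarith) (by linarith) x y hxy
      _ = _ := by rw [← ENNReal.ofReal_mul (Real.exp_nonneg _), ← Real.exp_add, add_sub_cancel]
  cases hiv : L.inputsAfter a iv with
  | none => simp [obsStepXE_some_of_inputsAfter_eq_none hiv]
  | some iv' =>
    rw [obsStepXE_some_of_trans hμ₁ hiv, obsStepXE_some_of_trans hμ₂ hiv]
    have hlen := (L.inputsAfter_eq_some_iff).1 hiv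
    by_cases hao : a ∈ L.obs
    · by_cases hae : a = e
      · simp only [if_pos hao, if_pos hae]
        refine hWF.tsum_ofReal_mul_obsProbE_le hμ₁ hμ₂ hδ₀ hδ hε' hν (ih _ _ ?_)
        rcases hlen with ⟨-, rfl⟩ | ⟨-, rfl⟩ <;> simp only [List.length_cons] <;> omega
      · simp [hao, hae]
    · simp only [if_neg hao]
      -- an unobservable action of `I ∪ R` is a data point, so it consumes an input
      have hai : a ∈ L.inp := ha.resolve_right fun hr => hao (Or.inr hr)
      obtain ⟨-, rfl⟩ := hlen.resolve_right fun h => h.1 hai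
      exact hWF.tsum_ofReal_mul_obsProbE_le hμ₁ hμ₂ hδ₀ hδ hε' hν (ih _ _ (by simp))

theorem IsUnwindingFamily.obsProbBound {ε : ℝ} {R : ℝ → Option S → Option S → Prop}
    (hR : L.IsUnwindingFamily ε R) (hWF : L.WF) (iv ev : List A) : L.ObsProbBound R ε iv ev := by
  intro ε' hε'₀ hε' x₁ x₂ hx
  match ev with
  | [] => simpa [obsProbXE_nil] using ENNReal.one_le_ofReal.2 (Real.one_le_exp hε'₀)
  | e :: ev =>
    rw [L.obsProbXE_cons, L.obsProbXE_cons, ← ENNReal.tsum_mul_left]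
    exact ENNReal.tsum_le_tsum fun a => hR.obsStepXE_le hWF hε'₀ hε' hx a
      fun iv' X _ => hR.obsProbBound hWF iv' X
termination_by iv.length + ev.length

theorem IsUnwindingFamily.symm {ε : ℝ} {R : ℝ → Option S → Option S → Prop}
    (hR : L.IsUnwindingFamily ε R) : L.IsUnwindingFamily ε fun κ x y => R κ y x := by
  obtain ⟨hε, hdis, hstep⟩ := hR
  refine ⟨hε, fun κ h₀ h₁ x₁ x₂ hx => (hdis κ h₀ h₁ x₂ x₁ hx).symm,
    fun κ h₀ h₁ x₁ x₂ hx a ha => ?_⟩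
  obtain ⟨hiff, hlift⟩ := hstep κ h₀ h₁ x₂ x₁ hx a ha
  refine ⟨hiff.symm, fun ν₁ ν₂ h₁ h₂ => ?_⟩
  obtain ⟨δ, hδ₀, hδ, hν⟩ := hlift ν₂ ν₁ h₂ h₁
  exact ⟨δ, hδ₀, hδ, hν.symm⟩

end PLTS

section Statements

open PLTS

variable {S : Type} {A : Type}

theorem stmt10_general (L : PLTS S A) (hWF : L.WF)
    (ε : ℝ) (R : ℝ → Option S → Option S → Prop) (hR : L.IsUnwindingFamily ε R)
    (ε' : ℝ) (hε'₀ : 0 ≤ ε') (hε' : ε' ≤ ε)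
    (x₁ x₂ : Option S) (hx : R ε' x₁ x₂)
    (ivec : List A)
    (evec : List A) :
    L.obsProbX x₁ ivec evec ≤ Real.exp ε' * L.obsProbX x₂ ivec evec ∧
    L.obsProbX x₂ ivec evec ≤ Real.exp ε' * L.obsProbX x₁ ivec evec := by
  have h₁₂ := hR.obsProbBound hWF ivec evec ε' hε'₀ hε' x₁ x₂ hx
  have h₂₁ := hR.symm.obsProbBound hWF ivec evec ε' hε'₀ hε' x₂ x₁ hx
  rw [hWF.obsProbX_eq_toReal, hWF.obsProbX_eq_toReal,
    ← ENNReal.toReal_ofReal (Real.exp_nonneg ε')]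
  exact ⟨ENNReal.toReal_le_toReal_mul ENNReal.ofReal_ne_top h₁₂ h₂₁,
    ENNReal.toReal_le_toReal_mul ENNReal.ofReal_ne_top h₂₁ h₁₂⟩

theorem stmt10 [Countable S] [Countable A] (L : PLTS S A) (hWF : L.WF)
    (ε : ℝ) (R : ℝ → Option S → Option S → Prop) (hR : L.IsUnwindingFamily ε R)
    (ε' : ℝ) (hε'₀ : 0 ≤ ε') (hε' : ε' ≤ ε)
    (x₁ x₂ : Option S) (hx : R ε' x₁ x₂)
    (ivec : List A) (hiv : ∀ i ∈ ivec, i ∈ L.inp)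
    (evec : List A) (hev : ∀ e ∈ evec, e ∈ L.obs) :
    L.obsProbX x₁ ivec evec ≤ Real.exp ε' * L.obsProbX x₂ ivec evec ∧
    L.obsProbX x₂ ivec evec ≤ Real.exp ε' * L.obsProbX x₁ ivec evec :=
  stmt10_general L hWF ε R hR ε' hε'₀ hε' x₁ x₂ hx ivec evec

end Statements
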